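/- arXiv:1004.0655 — 4 statements merged into one kernel-verified Lean document; each statement's English description precedes it below -/
import Mathlib

section
/- In the group G = ⟨a, d | ada = d²⟩, the element d³ is central. -/
theorem stmt_3 :
    ((PresentedGroup.of false : PresentedGroup
      ({FreeGroup.of true * FreeGroup.of false * FreeGroup.of true *
        (FreeGroup.of false ^ 2)⁻¹} : Set (FreeGroup Bool))) ^ 3)
      ∈ Subgroup.center _ := by
  set rels : Set (FreeGroup Bool) :=
    {FreeGroup.of true * FreeGroup.of false * FreeGroup.of true *
      (FreeGroup.of false ^ 2)⁻¹} with hrels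
  set a : PresentedGroup rels := PresentedGroup.of true with ha
  set d : PresentedGroup rels := PresentedGroup.of false with hd
  have hrel : a * d * a = d ^ 2 := by
    have h1 : (PresentedGroup.mk rels) (FreeGroup.of true * FreeGroup.of false *
        FreeGroup.of true * (FreeGroup.of false ^ 2)⁻¹) = 1 := by
      apply (QuotientGroup.eq_one_iff _).mpr
      exact Subgroup.subset_normalClosure (by simp [hrels])
    simp only [map_mul, map_inv, map_pow] at h1
    have h2 : a * d * a * (d ^ 2)⁻¹ = 1 := h1
    have := mul_inv_eq_one.mp h2
    exact this
  have h3 : d * a * d * a = d ^ 3 := by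
    calc d * a * d * a = d * (a * d * a) := by group
    _ = d * d ^ 2 := by rw [hrel]
    _ = d ^ 3 := by group
  have hcomm_a : a * d ^ 3 = d ^ 3 * a := by
    calc a * d ^ 3 = a * (d * a * d * a) := by rw [h3]
    _ = (a * d * a) * (d * a) := by group
    _ = d ^ 2 * (d * a) := by rw [hrel]
    _ = d ^ 3 * a := by group
  have hcent : Subgroup.centralizer {d ^ 3} = ⊤ := by
    rw [eq_top_iff, ← PresentedGroup.closure_range_of rels, Subgroup.closure_le]
    rintro x ⟨b, rfl⟩
    rw [SetLike.mem_coe, Subgroup.mem_centralizer_iff]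
    rintro y ⟨rfl⟩
    cases b
    · simp only [← hd]; group
    · exact hcomm_a.symm
  rw [Subgroup.mem_center_iff]
  intro g
  have : g ∈ Subgroup.centralizer {d ^ 3} := by rw [hcent]; trivial
  exact (Subgroup.mem_centralizer_iff.mp this _ rfl).symm
end

section
/- The groups ⟨s₂, s₃ | s₂⁵, s₃², (s₃s₂)⁴⟩ and ⟨s₂, s₃ | s₂⁵, s₃², (s₃s₂⁻¹s₃s₂)²⟩ are not isomorphic. -/
abbrev M5 := Multiplicative (ZMod 5)

theorem stmt_7 :
    IsEmpty (PresentedGroup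
      ({FreeGroup.of true ^ 5, FreeGroup.of false ^ 2,
        (FreeGroup.of false * FreeGroup.of true) ^ 4} : Set (FreeGroup Bool))
      ≃* PresentedGroup
      ({FreeGroup.of true ^ 5, FreeGroup.of false ^ 2,
        (FreeGroup.of false * (FreeGroup.of true)⁻¹ * FreeGroup.of false *
          FreeGroup.of true) ^ 2} : Set (FreeGroup Bool))) := by
  constructor
  intro e
  set rels₁ : Set (FreeGroup Bool) :=
    {FreeGroup.of true ^ 5, FreeGroup.of false ^ 2,
      (FreeGroup.of false * FreeGroup.of true) ^ 4} with hrels₁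
  set rels₂ : Set (FreeGroup Bool) :=
    {FreeGroup.of true ^ 5, FreeGroup.of false ^ 2,
      (FreeGroup.of false * (FreeGroup.of true)⁻¹ * FreeGroup.of false *
        FreeGroup.of true) ^ 2} with hrels₂
  -- a nontrivial hom from the second group to Multiplicative (ZMod 5)
  have hf : ∀ r ∈ rels₂, FreeGroup.lift
      (fun b : Bool => if b then Multiplicative.ofAdd (1 : ZMod 5) else 1) r = 1 := by
    intro r hr
    rcases hr with h | h | h <;> subst h <;> first | (simp; decide) | simp
  let φ : PresentedGroup rels₂ →* M5 := PresentedGroup.toGroup hf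
  let ψ : PresentedGroup rels₁ →* M5 := φ.comp e.toMonoidHom
  -- relator elements are 1 in the first group
  have hrel : ∀ r ∈ rels₁, (PresentedGroup.mk rels₁ r : PresentedGroup rels₁) = 1 := by
    intro r hr
    exact (QuotientGroup.eq_one_iff r).2 (Subgroup.subset_normalClosure hr)
  set a := ψ (PresentedGroup.of true) with ha
  set b := ψ (PresentedGroup.of false) with hb
  have h1 : a ^ 5 = 1 := by
    rw [ha, ← map_pow]
    have := hrel _ (Set.mem_insert _ _)
    rw [map_pow] at this
    rw [show (PresentedGroup.of true : PresentedGroup rels₁) ^ 5 = 1 from this, map_one]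
  have h2 : b ^ 2 = 1 := by
    rw [hb, ← map_pow]
    have := hrel _ (Set.mem_insert_of_mem _ (Set.mem_insert _ _))
    rw [map_pow] at this
    rw [show (PresentedGroup.of false : PresentedGroup rels₁) ^ 2 = 1 from this, map_one]
  have h3 : (b * a) ^ 4 = 1 := by
    rw [ha, hb, ← map_mul, ← map_pow]
    have := hrel _ (Set.mem_insert_of_mem _ (Set.mem_insert_of_mem _ rfl))
    rw [map_pow, map_mul] at this
    rw [show ((PresentedGroup.of false : PresentedGroup rels₁) * PresentedGroup.of true) ^ 4 = 1
      from this, map_one]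
  have key : ∀ a b : M5, a ^ 5 = 1 → b ^ 2 = 1 → (b * a) ^ 4 = 1 → a = 1 ∧ b = 1 := by decide
  obtain ⟨ha1, hb1⟩ := key a b h1 h2 h3
  -- so ψ is trivial
  have hψ : ψ = 1 := by
    apply PresentedGroup.ext
    intro x
    cases x
    · simpa using hb1
    · simpa using ha1
  -- but ψ (e.symm (of true)) = φ (of true) = ofAdd 1 ≠ 1
  have : ψ (e.symm (PresentedGroup.of true)) = Multiplicative.ofAdd (1 : ZMod 5) := by
    show φ (e (e.symm (PresentedGroup.of true))) = _
    rw [e.apply_symm_apply]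
    exact PresentedGroup.toGroup.of hf
  rw [hψ] at this
  simp at this
  exact (by decide : (Multiplicative.ofAdd (1 : ZMod 5)) ≠ 1) this.symm
end

section
/- The group G = ⟨s₂, s₃ | s₂⁵ = 1, s₃² = 1, (s₃s₂)⁴ = 1⟩ is infinite. -/
/-!
Send `s₂` to a matrix of `SL(2, ℝ)` with trace `φ = 2 cos (π / 5)` and `s₃` to the rotation by
`π / 2`, chosen so that `s₃ s₂` has trace `√2 = 2 cos (π / 4)`. By Cayley–Hamilton, a matrix of
`SL(2, R)` with trace `t` is a root of `X² - t X + 1`, which divides `X⁵ + 1`, `X² + 1`, `X⁴ + 1` for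
`t = φ, 0, √2` respectively; so the relators map to `-1`, and the presentation maps to `PSL(2, ℝ)`.
The image of `s₂² s₃` has trace `φ √2 > 2`. The traces of the powers of such a hyperbolic matrix
increase strictly, whereas a central element of `SL(2, ℝ)` has trace `±2`; hence `s₂² s₃` has
infinite order.
-/

open Matrix
open scoped MatrixGroups goldenRatio

namespace Matrix.SpecialLinearGroup

section CommRing

open Polynomial

variable {R : Type*} [CommRing R]

theorem neg_one_mem_center : (-1 : SL(2, R)) ∈ Subgroup.center SL(2, R) :=
  Subgroup.mem_center_iff.mpr fun A => by rw [neg_one_mul, mul_neg_one]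

variable [Nontrivial R]

theorem aeval_X_sq_sub_trace_mul_X_add_one (A : SL(2, R)) :
    aeval A.1 (X ^ 2 - C A.1.trace * X + 1) = 0 := by
  simpa [charpoly_fin_two] using aeval_self_charpoly A.1

theorem sq_eq_trace_smul_sub_one (A : SL(2, R)) : A.1 ^ 2 = A.1.trace • A.1 - 1 := by
  have h := aeval_X_sq_sub_trace_mul_X_add_one A
  simp only [map_add, map_sub, map_mul, map_pow, aeval_X, aeval_C, map_one,
    Algebra.algebraMap_eq_smul_one, smul_mul_assoc, one_mul] at h
  rw [eq_sub_iff_add_eq, ← sub_eq_zero, ← h]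
  abel

theorem trace_pow_add_two (A : SL(2, R)) (n : ℕ) :
    (A ^ (n + 2)).1.trace = A.1.trace * (A ^ (n + 1)).1.trace - (A ^ n).1.trace := by
  simp only [coe_pow]
  rw [pow_add, sq_eq_trace_smul_sub_one, mul_sub, mul_smul_comm, ← pow_succ, mul_one,
    trace_sub, trace_smul, smul_eq_mul]

theorem pow_eq_neg_one_of_dvd (A : SL(2, R)) {n : ℕ}
    (h : X ^ 2 - C A.1.trace * X + 1 ∣ (X ^ n + 1 : R[X])) : A ^ n = -1 := by
  have := aeval_eq_zero_of_dvd_aeval_eq_zero h (aeval_X_sq_sub_trace_mul_X_add_one A)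
  refine Subtype.ext ?_
  simpa [eq_neg_iff_add_eq_zero] using this

theorem sq_eq_neg_one_of_trace_eq_zero (A : SL(2, R)) (h : A.1.trace = 0) : A ^ 2 = -1 :=
  A.pow_eq_neg_one_of_dvd ⟨1, by rw [h, C_0]; ring⟩

theorem pow_four_eq_neg_one_of_trace_sq_eq_two (A : SL(2, R)) (h : A.1.trace ^ 2 = 2) :
    A ^ 4 = -1 :=
  A.pow_eq_neg_one_of_dvd ⟨X ^ 2 + C A.1.trace * X + 1, by
    linear_combination X ^ 2 * (by rw [← C_pow, h, C_ofNat] : C A.1.trace ^ 2 = 2)⟩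

theorem pow_five_eq_neg_one_of_trace_sq_eq (A : SL(2, R)) (h : A.1.trace ^ 2 = A.1.trace + 1) :
    A ^ 5 = -1 :=
  A.pow_eq_neg_one_of_dvd ⟨(X ^ 2 - (1 - C A.1.trace) * X + 1) * (X + 1), by
    linear_combination (X + 1) * X ^ 2 *
      (by rw [← C_pow, h, C_add, C_1] : C A.1.trace ^ 2 = C A.1.trace + 1)⟩

end CommRing

theorem strictMono_trace_pow_of_two_lt_trace (A : SL(2, ℝ)) (hA : 2 < A.1.trace) :
    StrictMono fun n : ℕ => (A ^ n).1.trace := by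
  have key : ∀ n : ℕ, 2 ≤ (A ^ n).1.trace ∧ (A ^ n).1.trace < (A ^ (n + 1)).1.trace := by
    intro n
    induction n with
    | zero => simpa using hA
    | succ n ih =>
      refine ⟨ih.1.trans ih.2.le, ?_⟩
      -- with `tₖ = tr (A ^ k)`: `tₙ₊₂ - tₙ₊₁ = (t₁ - 2) tₙ₊₁ + (tₙ₊₁ - tₙ)`
      rw [trace_pow_add_two]
      nlinarith [ih.1, ih.2]
  exact strictMono_nat_of_lt_succ fun n => (key n).2

theorem not_isOfFinOrder_of_two_lt_trace (A : SL(2, ℝ)) (hA : 2 < A.1.trace) :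
    ¬IsOfFinOrder (A : PSL(2, ℝ)) := by
  rw [isOfFinOrder_iff_pow_eq_one]
  rintro ⟨n, hn, hAn⟩
  rw [← QuotientGroup.mk_pow, QuotientGroup.eq_one_iff, mem_center_iff, Fintype.card_fin] at hAn
  obtain ⟨r, hr, hrA⟩ := hAn
  have htrace : (A ^ n).1.trace = 2 * r := by
    rw [← hrA]
    simp [two_mul]
  have hlt := strictMono_trace_pow_of_two_lt_trace A hA hn
  simp only [pow_zero, coe_one, trace_one, Fintype.card_fin, Nat.cast_ofNat, htrace] at hlt
  nlinarith

end Matrix.SpecialLinearGroup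

namespace DehnTriangleGroup

open Matrix.SpecialLinearGroup Real

-- The off-diagonal entries `b, c` solve `b - c = √2` and `b c = (φ - 3) / 4`, which gives
-- `det s₂ = 1` and `tr (s₃ s₂) = √2`.
noncomputable def s₂ : SL(2, ℝ) :=
  ⟨!![φ / 2, (√2 + √(φ - 1)) / 2; (√(φ - 1) - √2) / 2, φ / 2], by
    have h2 : √2 ^ 2 = 2 := sq_sqrt zero_le_two
    have hφ : √(φ - 1) ^ 2 = φ - 1 := sq_sqrt (by linarith [one_lt_goldenRatio])
    rw [det_fin_two_of]
    linear_combination (goldenRatio_sq - hφ + h2) / 4⟩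

def s₃ : SL(2, ℝ) := ⟨!![0, -1; 1, 0], by simp [det_fin_two_of]⟩

theorem trace_s₂ : s₂.1.trace = φ := by
  simp [s₂, trace_fin_two]

theorem trace_s₃ : s₃.1.trace = 0 := by
  simp [s₃, trace_fin_two]

theorem trace_s₃_mul_s₂ : (s₃ * s₂).1.trace = √2 := by
  rw [coe_mul]
  simp [s₂, s₃, trace_fin_two]
  ring

theorem two_lt_trace_s₂_mul_s₂_mul_s₃ : 2 < (s₂ * s₂ * s₃).1.trace := by
  have htrace : (s₂ * s₂ * s₃).1.trace = φ * √2 := by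
    rw [coe_mul, coe_mul]
    simp [s₂, s₃, trace_fin_two]
    ring
  have hsqrt : √2 < φ :=
    (sqrt_lt' goldenRatio_pos).mpr (by linarith [goldenRatio_sq, one_lt_goldenRatio])
  calc (2 : ℝ) = √2 * √2 := (mul_self_sqrt zero_le_two).symm
    _ < φ * √2 := by gcongr
    _ = _ := htrace.symm

theorem s₂_pow_five : s₂ ^ 5 = -1 :=
  s₂.pow_five_eq_neg_one_of_trace_sq_eq (by rw [trace_s₂, goldenRatio_sq])

theorem s₃_sq : s₃ ^ 2 = -1 :=
  s₃.sq_eq_neg_one_of_trace_eq_zero trace_s₃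

theorem s₃_mul_s₂_pow_four : (s₃ * s₂) ^ 4 = -1 :=
  (s₃ * s₂).pow_four_eq_neg_one_of_trace_sq_eq_two (by rw [trace_s₃_mul_s₂, sq_sqrt zero_le_two])

def relators : Set (FreeGroup Bool) :=
  {FreeGroup.of true ^ 5, FreeGroup.of false ^ 2, (FreeGroup.of false * FreeGroup.of true) ^ 4}

noncomputable def toPSL : PresentedGroup relators →* PSL(2, ℝ) :=
  PresentedGroup.toGroup (f := fun b => ((bif b then s₂ else s₃ : SL(2, ℝ)) : PSL(2, ℝ))) <| by
    have hneg := (QuotientGroup.eq_one_iff _).mpr (neg_one_mem_center (R := ℝ))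
    rintro r (rfl | rfl | rfl) <;>
      simp only [map_pow, map_mul, FreeGroup.lift_apply_of, cond_true, cond_false,
        ← QuotientGroup.mk_pow, ← QuotientGroup.mk_mul, s₂_pow_five, s₃_sq, s₃_mul_s₂_pow_four,
        hneg]

end DehnTriangleGroup

theorem stmt_12 :
    Infinite (PresentedGroup
      ({FreeGroup.of true ^ 5, FreeGroup.of false ^ 2,
        (FreeGroup.of false * FreeGroup.of true) ^ 4} : Set (FreeGroup Bool))) := by
  open DehnTriangleGroup Matrix.SpecialLinearGroup in
  show Infinite (PresentedGroup relators)
  have hg : ¬IsOfFinOrder (toPSL (.of true * .of true * .of false)) := by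
    simpa [toPSL] using not_isOfFinOrder_of_two_lt_trace _ two_lt_trace_s₂_mul_s₂_mul_s₃
  exact not_finite_iff_infinite.mp fun _ => hg (toPSL.isOfFinOrder (isOfFinOrder_of_finite _))
end

section
/- There is no group acting simply transitively by graph automorphisms on the vertices of the Petersen graph; equivalently, the Petersen graph is not a Cayley graph. -/
/-- The Petersen graph: vertices are the 2-element subsets of a 5-element set,
with an edge exactly when the subsets are disjoint. -/
def petersenAdj (s t : {s : Finset (Fin 5) // s.card = 2}) : Prop :=
  Disjoint s.1 t.1

namespace PetersenAux

abbrev PV := {s : Finset (Fin 5) // s.card = 2}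

instance : DecidableRel (fun s t : PV => Disjoint s.1 t.1) :=
  fun _ _ => inferInstanceAs (Decidable (Disjoint _ _))

lemma uniqCN : ∀ x y u u' : PV, x ≠ y → Disjoint x.1 u.1 → Disjoint y.1 u.1 →
    Disjoint x.1 u'.1 → Disjoint y.1 u'.1 → u = u' := by decide

lemma exCN : ∀ v w : PV, v ≠ w → ¬ Disjoint v.1 w.1 →
    ∃ u : PV, Disjoint v.1 u.1 ∧ Disjoint w.1 u.1 := by decide

lemma exNbr : ∀ v u : PV, ∃ w : PV, Disjoint v.1 w.1 ∧ w ≠ u := by decide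

lemma cardPV : Fintype.card PV = 10 := by decide

end PetersenAux

open PetersenAux in
theorem stmt_16 :
    ¬ ∃ H : Subgroup (Equiv.Perm {s : Finset (Fin 5) // s.card = 2}),
      (∀ g ∈ H, ∀ v w, petersenAdj v w ↔ petersenAdj (g v) (g w)) ∧
      (∀ v w, ∃! g : H, (g : Equiv.Perm {s : Finset (Fin 5) // s.card = 2}) v = w) := by
  rintro ⟨H, hAut, hST⟩
  have v0 : PV := ⟨{0, 1}, by decide⟩
  -- H ≃ PV, so card H = 10
  have hbij : Function.Bijective (fun g : H => (g : Equiv.Perm PV) v0) := by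
    constructor
    · intro a b hab
      obtain ⟨k, _, huniq⟩ := hST v0 ((a : Equiv.Perm PV) v0)
      exact (huniq a rfl).trans (huniq b hab.symm).symm
    · intro w
      obtain ⟨k, hk, _⟩ := hST v0 w
      exact ⟨k, hk⟩
  haveI : Fintype H := Fintype.ofFinite _
  have hcard : Fintype.card H = 10 := by
    rw [Fintype.card_of_bijective hbij, cardPV]
  -- Cauchy: element of order 2
  obtain ⟨g, hg2⟩ : ∃ g : H, orderOf g = 2 := by
    apply exists_prime_orderOf_dvd_card 2
    rw [hcard]; norm_num
  have hgne : g ≠ 1 := by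
    intro h; rw [h, orderOf_one] at hg2; exact absurd hg2 (by norm_num)
  set σ : Equiv.Perm PV := (g : Equiv.Perm PV) with hσ
  have hσinv : ∀ v : PV, σ (σ v) = v := by
    intro v
    have : g * g = 1 := by
      have := pow_orderOf_eq_one g
      rwa [hg2, pow_two] at this
    have h2 : ((g * g : H) : Equiv.Perm PV) = 1 := by rw [this]; rfl
    calc σ (σ v) = ((g * g : H) : Equiv.Perm PV) v := rfl
      _ = v := by rw [h2]; rfl
  have hadj : ∀ v w : PV, Disjoint v.1 w.1 ↔ Disjoint (σ v).1 (σ w).1 :=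
    hAut σ g.2
  -- fixed point free
  have hfpf : ∀ v : PV, σ v ≠ v := by
    intro v hv
    obtain ⟨k, _, huniq⟩ := hST v v
    have h1 : g = k := huniq g hv
    have h2 : (1 : H) = k := huniq 1 rfl
    exact hgne (h1.trans h2.symm)
  -- step 1: every vertex adjacent to its image
  have hstep1 : ∀ v : PV, Disjoint v.1 (σ v).1 := by
    intro v
    by_contra hnd
    obtain ⟨u, hu1, hu2⟩ := exCN v (σ v) (fun h => hfpf v h.symm) hnd
    -- g u is also a common neighbor of v and σ v
    have h3 : Disjoint (σ v).1 (σ u).1 := (hadj v u).mp hu1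
    have h4 : Disjoint v.1 (σ u).1 := by
      have := (hadj (σ v) u).mp hu2
      rwa [hσinv] at this
    exact hfpf u (uniqCN v (σ v) u (σ u) (fun h => hfpf v h.symm) hu1 hu2 h4 h3).symm
  -- step 2: 4-cycle contradiction
  obtain ⟨w, hvw, hwne⟩ := exNbr v0 (σ v0)
  have h1 : Disjoint v0.1 (σ v0).1 := hstep1 v0
  have h2 : Disjoint (σ v0).1 (σ w).1 := (hadj v0 w).mp hvw
  have h3 : Disjoint w.1 (σ w).1 := hstep1 w
  have hne : v0 ≠ σ w := by
    intro h
    apply hwne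
    have := congrArg σ h
    rw [hσinv] at this
    exact this.symm
  exact hwne (uniqCN v0 (σ w) (σ v0) w hne h1 (disjoint_comm.mp h2)
    hvw (disjoint_comm.mp h3)).symm
end
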